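/- Let dA, dE ≥ 1, let ψ ∈ ℂ^{dA} ⊗ ℂ^{dE} be a unit vector, let w ∈ ℂ^{dA} be a unit vector, and let δ ∈ [0, 2]. If ‖tr_E(|ψ⟩⟨ψ|) − |w⟩⟨w|‖₁ ≤ δ, then there exists a unit vector ξ ∈ ℂ^{dE} such that ‖|ψ⟩⟨ψ| − |w ⊗ ξ⟩⟨w ⊗ ξ|‖₁ ≤ √(2δ). -/

import Mathlib

open scoped Matrix Kronecker BigOperators ComplexOrder

/-- The trace norm of a complex matrix: `‖A‖₁ = tr √(Aᴴ A)`. -/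
noncomputable def traceNorm {n : Type*} [Fintype n] [DecidableEq n]
    (A : Matrix n n ℂ) : ℝ :=
  (((Matrix.posSemidef_conjTranspose_mul_self A).1.eigenvectorUnitary : Matrix n n ℂ) *
      Matrix.diagonal (((↑) : ℝ → ℂ) ∘ Real.sqrt ∘ (Matrix.posSemidef_conjTranspose_mul_self A).1.eigenvalues) *
      (star ((Matrix.posSemidef_conjTranspose_mul_self A).1.eigenvectorUnitary : Matrix n n ℂ))).trace.re

/-- The rank-one outer product `|v⟩⟨v|`. -/
def outer {n : Type*} (v : n → ℂ) : Matrix n n ℂ :=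
  Matrix.of fun i j => v i * (starRingEnd ℂ) (v j)

/-- `v` is a unit vector. -/
def IsUnitVec {n : Type*} [Fintype n] (v : n → ℂ) : Prop :=
  ∑ i, ‖v i‖ ^ 2 = 1

/-- Partial trace over the second (E) tensor factor. -/
noncomputable def trE {dA dE : ℕ} (M : Matrix (Fin dA × Fin dE) (Fin dA × Fin dE) ℂ) :
    Matrix (Fin dA) (Fin dA) ℂ :=
  Matrix.of fun i j => ∑ k : Fin dE, M (i, k) (j, k)

/-- Partial trace over the first (A) tensor factor. -/
noncomputable def trA {dA dE : ℕ} (M : Matrix (Fin dA × Fin dE) (Fin dA × Fin dE) ℂ) :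
    Matrix (Fin dE) (Fin dE) ℂ :=
  Matrix.of fun i j => ∑ k : Fin dA, M (k, i) (k, j)

/-!
Put `ξ' = (⟨w| ⊗ 1) ψ`, so that `⟨w, tr_E(|ψ⟩⟨ψ|) w⟩ = ‖ξ'‖²`. The matrix
`X = tr_E(|ψ⟩⟨ψ|) - |w⟩⟨w|` is Hermitian and traceless, so its negative eigenvalues sum to
`-‖X‖₁ / 2`, whence `1 - ‖ξ'‖² = -⟨w, X w⟩ ≤ ‖X‖₁ / 2 ≤ δ / 2`. For `ξ = ξ' / ‖ξ'‖` we get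
`|⟨ψ, w ⊗ ξ⟩| = ‖ξ'‖`, and for unit vectors `‖|ψ⟩⟨ψ| - |φ⟩⟨φ|‖₁ = 2 √(1 - |⟨ψ, φ⟩|²)`.
-/

open Matrix

section Vectors
variable {ι κ : Type*} [Fintype ι] [Fintype κ]

omit [Fintype ι] in
lemma outer_eq_vecMulVec (v : ι → ℂ) : outer v = vecMulVec v (star v) := rfl

lemma star_dotProduct_self_eq_sum_norm_sq (v : ι → ℂ) :
    star v ⬝ᵥ v = ((∑ i, ‖v i‖ ^ 2 : ℝ) : ℂ) := by
  push_cast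
  exact Finset.sum_congr rfl fun i _ => Complex.conj_mul' (v i)

lemma isUnitVec_iff_star_dotProduct_self {v : ι → ℂ} : IsUnitVec v ↔ star v ⬝ᵥ v = 1 := by
  rw [star_dotProduct_self_eq_sum_norm_sq, ← Complex.ofReal_one, Complex.ofReal_inj, IsUnitVec]

lemma isHermitian_outer (v : ι → ℂ) : (outer v).IsHermitian :=
  (posSemidef_vecMulVec_self_star v).1

lemma IsUnitVec.trace_outer {v : ι → ℂ} (hv : IsUnitVec v) : (outer v).trace = 1 := by
  rw [outer_eq_vecMulVec, trace_vecMulVec, dotProduct_comm,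
    isUnitVec_iff_star_dotProduct_self.mp hv]

lemma IsUnitVec.outer_mulVec_self {v : ι → ℂ} (hv : IsUnitVec v) : outer v *ᵥ v = v := by
  simp [outer_eq_vecMulVec, vecMulVec_mulVec, isUnitVec_iff_star_dotProduct_self.mp hv]

lemma IsUnitVec.kron {w : ι → ℂ} {ξ : κ → ℂ} (hw : IsUnitVec w) (hξ : IsUnitVec ξ) :
    IsUnitVec (fun p : ι × κ => w p.1 * ξ p.2) := by
  simp only [IsUnitVec, Fintype.sum_prod_type, norm_mul, mul_pow, ← Finset.sum_mul_sum]
  rw [hw, hξ, mul_one]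

lemma exists_isUnitVec_norm_star_dotProduct_sq [Nonempty ι] (v : ι → ℂ) :
    ∃ ξ : ι → ℂ, IsUnitVec ξ ∧ ‖star v ⬝ᵥ ξ‖ ^ 2 = ∑ i, ‖v i‖ ^ 2 := by
  classical
  simp_rw [isUnitVec_iff_star_dotProduct_self]
  have hsum := star_dotProduct_self_eq_sum_norm_sq v
  generalize ∑ i, ‖v i‖ ^ 2 = t at hsum ⊢
  rcases eq_or_ne v 0 with rfl | hv
  · refine ⟨Pi.single (Classical.arbitrary ι) 1, by simp, ?_⟩
    simpa [eq_comm] using hsum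
  have ht : 0 < t := by
    have := dotProduct_star_self_pos_iff.mpr hv
    rwa [hsum, Complex.zero_lt_real] at this
  have hst : (√t : ℂ) ^ 2 = t := by exact_mod_cast Real.sq_sqrt ht.le
  have hs0 : (√t : ℂ) ≠ 0 := by exact_mod_cast (Real.sqrt_pos.mpr ht).ne'
  refine ⟨((√t)⁻¹ : ℂ) • v, ?_, ?_⟩
  · rw [star_smul, smul_dotProduct, dotProduct_smul, hsum, star_inv₀, Complex.star_def,
      Complex.conj_ofReal, smul_eq_mul, smul_eq_mul, ← hst]
    field_simp
  · rw [dotProduct_smul, hsum, smul_eq_mul, ← hst, norm_mul, norm_inv, norm_pow]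
    field_simp
    rw [Complex.norm_real, Real.norm_of_nonneg (Real.sqrt_nonneg t), Real.sq_sqrt ht.le]

/-- `partialInner w ψ` is `(⟨w| ⊗ 1) ψ`. -/
def partialInner (w : ι → ℂ) (ψ : ι × κ → ℂ) : κ → ℂ :=
  fun k => star w ⬝ᵥ fun i => ψ (i, k)

lemma star_dotProduct_kron (ψ : ι × κ → ℂ) (w : ι → ℂ) (ξ : κ → ℂ) :
    star ψ ⬝ᵥ (fun p : ι × κ => w p.1 * ξ p.2) = star (partialInner w ψ) ⬝ᵥ ξ := by
  simp only [dotProduct, partialInner, Fintype.sum_prod_type, Pi.star_apply, star_sum, star_mul,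
    star_star, Finset.sum_mul]
  rw [Finset.sum_comm]
  exact Finset.sum_congr rfl fun k _ => Finset.sum_congr rfl fun i _ => by ring

end Vectors

lemma Matrix.IsHermitian.posSemidef_mul_self {n : Type*} [Fintype n] {A : Matrix n n ℂ}
    (hA : A.IsHermitian) : (A * A).PosSemidef := by
  simpa only [hA.eq] using posSemidef_conjTranspose_mul_self A

lemma neg_sum_mul_le_half_sum_abs {ι : Type*} [Fintype ι] {l p : ι → ℝ} (hl : ∑ i, l i = 0)
    (hp0 : ∀ i, 0 ≤ p i) (hp1 : ∀ i, p i ≤ 1) : -∑ i, l i * p i ≤ (∑ i, |l i|) / 2 := by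
  have hterm : ∀ i, -(l i * p i) ≤ (|l i| - l i) / 2 := fun i => by
    rcases le_or_gt 0 (l i) with h | h
    · rw [abs_of_nonneg h]; nlinarith [hp0 i]
    · rw [abs_of_neg h]; nlinarith [hp1 i]
  calc -∑ i, l i * p i = ∑ i, -(l i * p i) := by rw [Finset.sum_neg_distrib]
    _ ≤ ∑ i, (|l i| - l i) / 2 := Finset.sum_le_sum fun i _ => hterm i
    _ = (∑ i, |l i|) / 2 := by rw [← Finset.sum_div, Finset.sum_sub_distrib, hl, sub_zero]

section TraceNorm
variable {n : Type*} [Fintype n] [DecidableEq n]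

lemma traceNorm_eq_re_trace_of_sq_eq {A M : Matrix n n ℂ} (hM : M.PosSemidef)
    (h : M ^ 2 = Aᴴ * A) : traceNorm A = M.trace.re := by
  have hsqrt : cfc Real.sqrt (Aᴴ * A) = M := by
    rw [← h, ← cfc_comp_pow Real.sqrt 2 M (ha := hM.1.isSelfAdjoint)]
    have hspec : Set.EqOn (Real.sqrt <| · ^ 2) id (spectrum ℝ M) := by
      rw [hM.1.spectrum_real_eq_range_eigenvalues]
      rintro _ ⟨i, rfl⟩
      exact Real.sqrt_sq (hM.eigenvalues_nonneg i)
    rw [cfc_congr hspec, cfc_id ℝ M hM.1.isSelfAdjoint]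
  rw [traceNorm, ← hsqrt, (posSemidef_conjTranspose_mul_self A).1.cfc_eq]
  rfl

lemma traceNorm_zero : traceNorm (0 : Matrix n n ℂ) = 0 := by
  simp [traceNorm_eq_re_trace_of_sq_eq PosSemidef.zero]

lemma Matrix.IsHermitian.traceNorm_eq_sum_abs_eigenvalues {X : Matrix n n ℂ} (hX : X.IsHermitian) :
    traceNorm X = ∑ i, |hX.eigenvalues i| := by
  set absX := Unitary.conjStarAlgAut ℂ _ hX.eigenvectorUnitary
    (diagonal fun i => ((|hX.eigenvalues i| : ℝ) : ℂ)) with habsX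
  have hpsd : absX.PosSemidef := by
    refine (PosSemidef.diagonal fun i => ?_).mul_mul_conjTranspose_same _
    simp
  have hsq : absX ^ 2 = Xᴴ * X := by
    rw [hX.eq, ← sq, habsX, ← map_pow, diagonal_pow]
    conv_rhs => rw [hX.spectral_theorem, ← map_pow, diagonal_pow]
    congr 2
    ext i
    simp [← Complex.ofReal_pow]
  rw [traceNorm_eq_re_trace_of_sq_eq hpsd hsq, habsX, Unitary.conjStarAlgAut_apply,
    trace_mul_cycle, Unitary.coe_star_mul_self, one_mul, trace_diagonal, Complex.re_sum]
  simp

lemma Matrix.IsHermitian.star_dotProduct_mulVec_eq_sum {X : Matrix n n ℂ} (hX : X.IsHermitian)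
    (w : n → ℂ) :
    ∃ v : n → ℂ, star v ⬝ᵥ v = star w ⬝ᵥ w ∧
      star w ⬝ᵥ (X *ᵥ w) = ∑ i, ((hX.eigenvalues i * ‖v i‖ ^ 2 : ℝ) : ℂ) := by
  have hspec := hX.spectral_theorem
  generalize hX.eigenvectorUnitary = U at hspec
  have hstar : star (star (U : Matrix n n ℂ) *ᵥ w) = star w ᵥ* (U : Matrix n n ℂ) := by
    rw [star_mulVec, star_eq_conjTranspose, conjTranspose_conjTranspose]
  refine ⟨star (U : Matrix n n ℂ) *ᵥ w, ?_, ?_⟩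
  · rw [hstar, ← dotProduct_mulVec, mulVec_mulVec, mem_unitaryGroup_iff.mp U.2, one_mulVec]
  · conv_lhs => rw [hspec, Unitary.conjStarAlgAut_apply, ← mulVec_mulVec,
      ← mulVec_mulVec, dotProduct_mulVec, ← hstar]
    simp only [dotProduct, mulVec_diagonal, Pi.star_apply, Function.comp_apply,
      Complex.coe_algebraMap]
    push_cast
    refine Finset.sum_congr rfl fun i _ => ?_
    rw [← Complex.conj_mul', Complex.star_def]
    ring

lemma Matrix.IsHermitian.neg_re_star_dotProduct_mulVec_le_half_traceNorm {X : Matrix n n ℂ}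
    (hX : X.IsHermitian) (htr : X.trace = 0) {w : n → ℂ} (hw : IsUnitVec w) :
    -(star w ⬝ᵥ (X *ᵥ w)).re ≤ traceNorm X / 2 := by
  obtain ⟨v, hvw, hXw⟩ := hX.star_dotProduct_mulVec_eq_sum w
  have hv : IsUnitVec v := isUnitVec_iff_star_dotProduct_self.mpr
    (hvw.trans (isUnitVec_iff_star_dotProduct_self.mp hw))
  have hsum : ∑ i, hX.eigenvalues i = 0 := by
    have := hX.trace_eq_sum_eigenvalues
    simp only [htr, Complex.coe_algebraMap] at this
    exact_mod_cast this.symm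
  rw [hXw, hX.traceNorm_eq_sum_abs_eigenvalues, ← Complex.ofReal_sum, Complex.ofReal_re]
  refine neg_sum_mul_le_half_sum_abs hsum (fun i => sq_nonneg _) fun i => ?_
  rw [← hv]
  exact Finset.single_le_sum (f := fun j => ‖v j‖ ^ 2) (fun j _ => sq_nonneg _)
    (Finset.mem_univ i)

/-- `(√s)⁻¹ • (A * A)` is the positive square root of `Aᴴ * A`. -/
lemma Matrix.IsHermitian.traceNorm_eq_of_mul_mul_self_eq_smul {A : Matrix n n ℂ}
    (hA : A.IsHermitian) {s : ℝ} (hs : 0 < s) (h : A * A * A = s • A) :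
    traceNorm A = (A * A).trace.re / √s := by
  have hsq : ((√s)⁻¹ • (A * A)) ^ 2 = Aᴴ * A := by
    rw [sq, smul_mul_smul_comm, ← mul_assoc, h, smul_mul_assoc, smul_smul, ← sq, inv_pow,
      Real.sq_sqrt hs.le, inv_mul_cancel₀ hs.ne', one_smul, hA.eq]
  rw [traceNorm_eq_re_trace_of_sq_eq (hA.posSemidef_mul_self.smul (by positivity)) hsq,
    trace_smul, Complex.real_smul, Complex.re_ofReal_mul, inv_mul_eq_div]

end TraceNorm

section OuterDifference
variable {n : Type*} [Fintype n]

lemma star_dotProduct_mul_star_dotProduct (ψ φ : n → ℂ) :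
    (star φ ⬝ᵥ ψ) * (star ψ ⬝ᵥ φ) = ((‖star ψ ⬝ᵥ φ‖ ^ 2 : ℝ) : ℂ) := by
  rw [star_dotProduct φ ψ, Complex.star_def, Complex.conj_mul', Complex.ofReal_pow]

lemma outer_sub_outer_mul_self {ψ φ : n → ℂ} (hψ : IsUnitVec ψ) (hφ : IsUnitVec φ) :
    (outer ψ - outer φ) * (outer ψ - outer φ) = outer ψ + outer φ
      - (star ψ ⬝ᵥ φ) • vecMulVec ψ (star φ) - (star φ ⬝ᵥ ψ) • vecMulVec φ (star ψ) := by
  simp only [outer_eq_vecMulVec, sub_mul, mul_sub, vecMulVec_mul_vecMulVec,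
    isUnitVec_iff_star_dotProduct_self.mp hψ, isUnitVec_iff_star_dotProduct_self.mp hφ,
    vecMulVec_smul, one_smul]
  abel

lemma outer_sub_outer_mul_self_mul {ψ φ : n → ℂ} (hψ : IsUnitVec ψ) (hφ : IsUnitVec φ) :
    (outer ψ - outer φ) * (outer ψ - outer φ) * (outer ψ - outer φ)
      = (1 - ‖star ψ ⬝ᵥ φ‖ ^ 2) • (outer ψ - outer φ) := by
  rw [outer_sub_outer_mul_self hψ hφ]
  simp only [outer_eq_vecMulVec, sub_mul, add_mul, mul_sub, smul_mul_assoc,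
    vecMulVec_mul_vecMulVec, isUnitVec_iff_star_dotProduct_self.mp hψ,
    isUnitVec_iff_star_dotProduct_self.mp hφ, vecMulVec_smul, one_smul, smul_smul,
    mul_comm (star ψ ⬝ᵥ φ) (star φ ⬝ᵥ ψ), star_dotProduct_mul_star_dotProduct ψ φ,
    Complex.coe_smul]
  module

lemma trace_outer_sub_outer_mul_self {ψ φ : n → ℂ} (hψ : IsUnitVec ψ) (hφ : IsUnitVec φ) :
    ((outer ψ - outer φ) * (outer ψ - outer φ)).trace
      = ((2 * (1 - ‖star ψ ⬝ᵥ φ‖ ^ 2) : ℝ) : ℂ) := by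
  rw [outer_sub_outer_mul_self hψ hφ]
  simp only [outer_eq_vecMulVec, trace_sub, trace_add, trace_smul, trace_vecMulVec,
    dotProduct_comm _ (star _), isUnitVec_iff_star_dotProduct_self.mp hψ,
    isUnitVec_iff_star_dotProduct_self.mp hφ, smul_eq_mul, mul_comm (star ψ ⬝ᵥ φ) (star φ ⬝ᵥ ψ),
    star_dotProduct_mul_star_dotProduct ψ φ]
  push_cast
  ring

lemma traceNorm_outer_sub_outer [DecidableEq n] {ψ φ : n → ℂ} (hψ : IsUnitVec ψ)
    (hφ : IsUnitVec φ) : traceNorm (outer ψ - outer φ) = 2 * √(1 - ‖star ψ ⬝ᵥ φ‖ ^ 2) := by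
  have hA := (isHermitian_outer ψ).sub (isHermitian_outer φ)
  have htr := trace_outer_sub_outer_mul_self hψ hφ
  set s := 1 - ‖star ψ ⬝ᵥ φ‖ ^ 2
  have hs : 0 ≤ s := by
    have := hA.posSemidef_mul_self.trace_nonneg
    rw [htr, Complex.zero_le_real] at this
    linarith
  rcases hs.eq_or_lt with hs0 | hs0
  · have hA0 : outer ψ - outer φ = 0 := by
      rw [← trace_conjTranspose_mul_self_eq_zero_iff, hA.eq, htr, ← hs0, mul_zero,
        Complex.ofReal_zero]
    rw [hA0, traceNorm_zero, ← hs0, Real.sqrt_zero, mul_zero]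
  · rw [hA.traceNorm_eq_of_mul_mul_self_eq_smul hs0 (outer_sub_outer_mul_self_mul hψ hφ), htr,
      Complex.ofReal_re]
    field_simp
    exact (Real.sq_sqrt hs).symm

end OuterDifference

section PartialTrace
variable {dA dE : ℕ}

lemma trace_trE (M : Matrix (Fin dA × Fin dE) (Fin dA × Fin dE) ℂ) :
    (trE M).trace = M.trace := by
  simp only [trace, diag, trE, of_apply, Fintype.sum_prod_type]

lemma Matrix.IsHermitian.trE {M : Matrix (Fin dA × Fin dE) (Fin dA × Fin dE) ℂ}
    (hM : M.IsHermitian) : (trE M).IsHermitian := by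
  ext i j
  simp only [conjTranspose_apply, _root_.trE, of_apply, star_sum]
  exact Finset.sum_congr rfl fun k _ => hM.apply (i, k) (j, k)

lemma star_dotProduct_trE_outer_mulVec (ψ : Fin dA × Fin dE → ℂ) (w : Fin dA → ℂ) :
    star w ⬝ᵥ (trE (outer ψ) *ᵥ w) = star (partialInner w ψ) ⬝ᵥ partialInner w ψ := by
  simp only [dotProduct, mulVec, partialInner, trE, outer, of_apply, Pi.star_apply, star_sum,
    star_mul, star_star, Finset.sum_mul, Finset.mul_sum]
  rw [Finset.sum_comm]
  refine (Finset.sum_congr rfl fun j _ => Finset.sum_comm).trans ?_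
  rw [Finset.sum_comm]
  refine Finset.sum_congr rfl fun k _ => ?_
  rw [Finset.sum_comm]
  exact Finset.sum_congr rfl fun i _ => Finset.sum_congr rfl fun j _ => by
    rw [Complex.star_def]; ring

end PartialTrace

theorem approx_pure_marginal_implies_approx_product_general
    {dA dE : ℕ} (hdE : 1 ≤ dE)
    (ψ : Fin dA × Fin dE → ℂ) (hψ : IsUnitVec ψ)
    (w : Fin dA → ℂ) (hw : IsUnitVec w)
    (δ : ℝ)
    (hmarg : traceNorm (trE (outer ψ) - outer w) ≤ δ) :
    ∃ ξ : Fin dE → ℂ, IsUnitVec ξ ∧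
      traceNorm (outer ψ - outer (fun p : Fin dA × Fin dE => w p.1 * ξ p.2))
        ≤ Real.sqrt (2 * δ) := by
  have hX := (isHermitian_outer ψ).trE.sub (isHermitian_outer w)
  have htr : (trE (outer ψ) - outer w).trace = 0 := by
    rw [trace_sub, trace_trE, hψ.trace_outer, hw.trace_outer, sub_self]
  have hfid : 1 - ∑ k, ‖partialInner w ψ k‖ ^ 2 ≤ δ / 2 := by
    have := hX.neg_re_star_dotProduct_mulVec_le_half_traceNorm htr hw
    rw [sub_mulVec, dotProduct_sub, star_dotProduct_trE_outer_mulVec,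
      star_dotProduct_self_eq_sum_norm_sq, hw.outer_mulVec_self,
      isUnitVec_iff_star_dotProduct_self.mp hw, Complex.sub_re, Complex.ofReal_re,
      Complex.one_re] at this
    linarith
  have : Nonempty (Fin dE) := Fin.pos_iff_nonempty.mp hdE
  obtain ⟨ξ, hξ, hξψ⟩ := exists_isUnitVec_norm_star_dotProduct_sq (partialInner w ψ)
  refine ⟨ξ, hξ, ?_⟩
  rw [traceNorm_outer_sub_outer hψ (hw.kron hξ), star_dotProduct_kron, hξψ,
    ← Real.sqrt_sq zero_le_two, ← Real.sqrt_mul (sq_nonneg 2)]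
  exact Real.sqrt_le_sqrt (by norm_num; linarith)

theorem approx_pure_marginal_implies_approx_product
    {dA dE : ℕ} (hdA : 1 ≤ dA) (hdE : 1 ≤ dE)
    (ψ : Fin dA × Fin dE → ℂ) (hψ : IsUnitVec ψ)
    (w : Fin dA → ℂ) (hw : IsUnitVec w)
    (δ : ℝ) (hδ0 : 0 ≤ δ) (hδ2 : δ ≤ 2)
    (hmarg : traceNorm (trE (outer ψ) - outer w) ≤ δ) :
    ∃ ξ : Fin dE → ℂ, IsUnitVec ξ ∧
      traceNorm (outer ψ - outer (fun p : Fin dA × Fin dE => w p.1 * ξ p.2))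
        ≤ Real.sqrt (2 * δ) :=
  approx_pure_marginal_implies_approx_product_general hdE ψ hψ w hw δ hmarg
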